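/- For single-qubit commuting states ρ(s) = diag(s, 1-s) and ρ(r) = diag(r, 1-r) with r, s ∈ [0,1], the optimal quantum transport cost with projective cost C = (1/2)(I - S) satisfies T^Q(ρ(s), ρ(r)) ≥ (1/2) max{(√r - √s)², (√(1-r) - √(1-s))²}, as witnessed by the dual feasible pairs obtained from the diagonal matrices σ^A = diag(a₁, a₂), σ^B = diag(b₁, b₂) with C - σ^A ⊗ I - I ⊗ σ^B ≥ 0 chosen appropriately. -/

import Mathlib

open Matrix Complex
open scoped Matrix Kronecker ComplexOrder

noncomputable section

/-- Partial trace over the second factor. -/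
def ptraceB {N : ℕ} (ρ : Matrix (Fin N × Fin N) (Fin N × Fin N) ℂ) :
    Matrix (Fin N) (Fin N) ℂ :=
  Matrix.of fun i j => ∑ k, ρ (i, k) (j, k)

/-- Partial trace over the first factor. -/
def ptraceA {N : ℕ} (ρ : Matrix (Fin N × Fin N) (Fin N × Fin N) ℂ) :
    Matrix (Fin N) (Fin N) ℂ :=
  Matrix.of fun i j => ∑ k, ρ (k, i) (k, j)

/-- A density matrix: positive semidefinite with unit trace. -/
def IsDensity {n : Type*} [Fintype n] (ρ : Matrix n n ℂ) : Prop :=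
  ρ.PosSemidef ∧ ρ.trace = 1

/-- The set of couplings of two states. -/
def couplings {N : ℕ} (ρA ρB : Matrix (Fin N) (Fin N) ℂ) :
    Set (Matrix (Fin N × Fin N) (Fin N × Fin N) ℂ) :=
  {ρ | IsDensity ρ ∧ ptraceB ρ = ρA ∧ ptraceA ρ = ρB}

/-- The swap operator on `ℂ^N ⊗ ℂ^N`. -/
def swapOp (N : ℕ) : Matrix (Fin N × Fin N) (Fin N × Fin N) ℂ :=
  Matrix.of fun p q => if p.1 = q.2 ∧ p.2 = q.1 then 1 else 0

/-- The projective quantum cost matrix `C = (1/2)(I - S)`. -/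
def projCost (N : ℕ) : Matrix (Fin N × Fin N) (Fin N × Fin N) ℂ :=
  (1 / 2 : ℂ) • ((1 : Matrix (Fin N × Fin N) (Fin N × Fin N) ℂ) - swapOp N)

/-- The optimal quantum transport cost for a cost matrix `C`. -/
def TQ {N : ℕ} (C : Matrix (Fin N × Fin N) (Fin N × Fin N) ℂ)
    (ρA ρB : Matrix (Fin N) (Fin N) ℂ) : ℝ :=
  sInf {x : ℝ | ∃ ρ ∈ couplings ρA ρB, ((C * ρ).trace).re = x}

/-!
For a coupling `ρ` write `w, x, y, z` for the diagonal entries at `00, 01, 10, 11` and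
`m = Re ρ₀₁,₁₀`. The cost is `(x + y)/2 - m`, and positivity of the `{01, 10}` minor gives
`m ≤ √(xy)`. The marginals are `w + x = s`, `w + y = r`, and Cauchy–Schwarz
`w + √(xy) ≤ √((w + x)(w + y))` turns the bound into `(√r - √s)²/2`; using `z`, with
`z + x = 1 - r`, `z + y = 1 - s`, gives the other term. The product coupling keeps the infimum
from being the junk value `sInf ∅ = 0`.
-/

namespace Matrix.PosSemidef

variable {n : Type*} {A : Matrix n n ℂ}

theorem normSq_apply_le (hA : A.PosSemidef) (i j : n) :
    normSq (A i j) ≤ (A i i).re * (A j j).re := by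
  have hdet := (hA.submatrix ![i, j]).det_nonneg
  rw [det_fin_two] at hdet
  simp only [submatrix_apply, Matrix.cons_val_zero, Matrix.cons_val_one] at hdet
  rw [← hA.1.apply j i, Complex.star_def, mul_conj] at hdet
  have hii := (Complex.nonneg_iff.1 (hA.diag_nonneg (i := i))).2
  have hjj := (Complex.nonneg_iff.1 (hA.diag_nonneg (i := j))).2
  have := (Complex.nonneg_iff.1 hdet).1
  simp only [sub_re, mul_re, ofReal_re, ← hii, ← hjj, mul_zero, sub_zero] at this
  linarith

theorem re_apply_le_sqrt (hA : A.PosSemidef) (i j : n) :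
    (A i j).re ≤ √((A i i).re * (A j j).re) :=
  (re_le_norm _).trans <| (Complex.norm_def _).trans_le <|
    Real.sqrt_le_sqrt (hA.normSq_apply_le i j)

end Matrix.PosSemidef

theorem add_sqrt_mul_le_sqrt_mul_add {w x y : ℝ} (hw : 0 ≤ w) (hx : 0 ≤ x) (hy : 0 ≤ y) :
    w + √(x * y) ≤ √((w + x) * (w + y)) := by
  rw [Real.sqrt_mul hx]
  apply Real.le_sqrt_of_sq_le
  have hxy : 2 * (√x * √y) ≤ x + y := by
    nlinarith [sq_nonneg (√x - √y), Real.sq_sqrt hx, Real.sq_sqrt hy]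
  nlinarith [Real.sq_sqrt hx, Real.sq_sqrt hy]

theorem sq_sqrt_add_sub_sqrt_add_le {w x y m : ℝ} (hw : 0 ≤ w) (hx : 0 ≤ x) (hy : 0 ≤ y)
    (hm : m ≤ √(x * y)) :
    (√(w + x) - √(w + y)) ^ 2 / 2 ≤ (x + y) / 2 - m := by
  have hcs := add_sqrt_mul_le_sqrt_mul_add hw hx hy
  rw [sub_sq, Real.sq_sqrt (by positivity), Real.sq_sqrt (by positivity), mul_assoc,
    ← Real.sqrt_mul (by positivity)]
  linarith

theorem kronecker_mem_couplings {N : ℕ} {ρA ρB : Matrix (Fin N) (Fin N) ℂ}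
    (hA : IsDensity ρA) (hB : IsDensity ρB) : ρA ⊗ₖ ρB ∈ couplings ρA ρB := by
  refine ⟨⟨hA.1.kronecker hB.1, by rw [trace_kronecker, hA.2, hB.2, one_mul]⟩, ?_, ?_⟩
  · have htrB : ∑ k, ρB k k = 1 := hB.2
    ext i j
    simp [ptraceB, ← Finset.mul_sum, htrB]
  · have htrA : ∑ k, ρA k k = 1 := hA.2
    ext i j
    simp [ptraceA, ← Finset.sum_mul, htrA]

theorem isDensity_diagonal_qubit {s : ℝ} (hs : s ∈ Set.Icc (0 : ℝ) 1) :
    IsDensity (diagonal ![(s : ℂ), 1 - s]) := by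
  refine ⟨PosSemidef.diagonal fun i => ?_, by simp⟩
  fin_cases i
  · simpa using hs.1
  · simpa [← ofReal_one, ← ofReal_sub] using hs.2

theorem re_trace_projCost_two_mul {ρ : Matrix (Fin 2 × Fin 2) (Fin 2 × Fin 2) ℂ}
    (hρ : ρ.IsHermitian) :
    ((projCost 2 * ρ).trace).re =
      ((ρ (0, 1) (0, 1)).re + (ρ (1, 0) (1, 0)).re) / 2 - (ρ (0, 1) (1, 0)).re := by
  have hre : (ρ (1, 0) (0, 1)).re = (ρ (0, 1) (1, 0)).re := by
    rw [← hρ.apply (0, 1) (1, 0), Complex.star_def, conj_re]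
  simp [projCost, swapOp, trace, mul_apply, Fintype.sum_prod_type, Fin.sum_univ_two,
    one_apply, Prod.ext_iff, hre]
  ring

theorem half_max_le_re_trace_projCost_mul {r s : ℝ}
    {ρ : Matrix (Fin 2 × Fin 2) (Fin 2 × Fin 2) ℂ}
    (hρ : ρ ∈ couplings (diagonal ![(s : ℂ), 1 - s]) (diagonal ![(r : ℂ), 1 - r])) :
    (1 / 2) * max ((√r - √s) ^ 2) ((√(1 - r) - √(1 - s)) ^ 2) ≤
      ((projCost 2 * ρ).trace).re := by
  obtain ⟨⟨hpsd, -⟩, hB, hA⟩ := hρ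
  have hs0 : (ρ (0, 0) (0, 0)).re + (ρ (0, 1) (0, 1)).re = s := by
    simpa [ptraceB, Fin.sum_univ_two] using congrArg (fun M => (M 0 0).re) hB
  have hs1 : (ρ (1, 0) (1, 0)).re + (ρ (1, 1) (1, 1)).re = 1 - s := by
    simpa [ptraceB, Fin.sum_univ_two] using congrArg (fun M => (M 1 1).re) hB
  have hr0 : (ρ (0, 0) (0, 0)).re + (ρ (1, 0) (1, 0)).re = r := by
    simpa [ptraceA, Fin.sum_univ_two] using congrArg (fun M => (M 0 0).re) hA
  have hr1 : (ρ (0, 1) (0, 1)).re + (ρ (1, 1) (1, 1)).re = 1 - r := by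
    simpa [ptraceA, Fin.sum_univ_two] using congrArg (fun M => (M 1 1).re) hA
  have hdiag (p) : 0 ≤ (ρ p p).re := (Complex.nonneg_iff.1 hpsd.diag_nonneg).1
  have hoff := hpsd.re_apply_le_sqrt (0, 1) (1, 0)
  have hleft := sq_sqrt_add_sub_sqrt_add_le (hdiag (0, 0)) (hdiag _) (hdiag _) hoff
  have hright := sq_sqrt_add_sub_sqrt_add_le (hdiag (1, 1)) (hdiag _) (hdiag _) hoff
  rw [hs0, hr0, sub_sq_comm] at hleft
  rw [add_comm, hr1, add_comm, hs1] at hright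
  rw [re_trace_projCost_two_mul hpsd.1, mul_max_of_nonneg _ _ one_half_pos.le]
  exact max_le (by linarith) (by linarith)

theorem TQ_commuting_qubits_lower_bound (r s : ℝ)
    (hr : r ∈ Set.Icc (0 : ℝ) 1) (hs : s ∈ Set.Icc (0 : ℝ) 1) :
    TQ (projCost 2)
        (Matrix.diagonal ![(s : ℂ), 1 - s]) (Matrix.diagonal ![(r : ℂ), 1 - r]) ≥
      (1 / 2) * max ((Real.sqrt r - Real.sqrt s) ^ 2)
        ((Real.sqrt (1 - r) - Real.sqrt (1 - s)) ^ 2) := by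
  have hprod := kronecker_mem_couplings (isDensity_diagonal_qubit hs) (isDensity_diagonal_qubit hr)
  refine le_csInf ⟨_, _, hprod, rfl⟩ ?_
  rintro _ ⟨ρ, hρ, rfl⟩
  exact half_max_le_re_trace_projCost_mul hρ
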